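/- arXiv:1807.09640 — 12 statements merged into one kernel-verified Lean document; each statement's English description precedes it below -/
import Mathlib

section
/- For every pair of complex numbers (t2, t4), the surface in ℂ³ defined by F(X,W,Z) = Z·(X² − 4Z²) + W² − 4·t2·Z² − 4·(t4 + t2²/8)·Z = 0 is singular, i.e. there exists a point (X,W,Z) ∈ ℂ³ with F(X,W,Z) = 0 at which all three partial derivatives of F vanish. (This is the type B₂ instance of the theorem that every fiber of the quotient deformation is singular.) -/
/-!
The surface contains the line `W = Z = 0`, along which the gradient of `F` is `(0, 0, X² - b)`,
where `b = 4 (t₄ + t₂² / 8)` is the coefficient of `-Z`. A square root of `b`, which exists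
in `ℂ`, is therefore the `X`-coordinate of a singular point.
-/

section Partials

variable {𝕜 : Type*} [NontriviallyNormedField 𝕜]

theorem deriv_surface_fst (a b W Z X : 𝕜) :
    deriv (fun X' : 𝕜 => Z * (X' ^ 2 - 4 * Z ^ 2) + W ^ 2 - a * Z ^ 2 - b * Z) X =
      2 * Z * X := by
  have h := ((((hasDerivAt_pow 2 X).sub_const (4 * Z ^ 2)).const_mul Z).add_const (W ^ 2)
    |>.sub_const (a * Z ^ 2)).sub_const (b * Z)
  rw [h.deriv]
  ring

theorem deriv_surface_snd (a b X Z W : 𝕜) :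
    deriv (fun W' : 𝕜 => Z * (X ^ 2 - 4 * Z ^ 2) + W' ^ 2 - a * Z ^ 2 - b * Z) W = 2 * W := by
  have h := (((hasDerivAt_pow 2 W).const_add (Z * (X ^ 2 - 4 * Z ^ 2))).sub_const
    (a * Z ^ 2)).sub_const (b * Z)
  rw [h.deriv]
  ring

theorem deriv_surface_thd (a b X W Z : 𝕜) :
    deriv (fun Z' : 𝕜 => Z' * (X ^ 2 - 4 * Z' ^ 2) + W ^ 2 - a * Z' ^ 2 - b * Z') Z =
      X ^ 2 - 12 * Z ^ 2 - 2 * a * Z - b := by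
  have h : HasDerivAt (fun Z' : 𝕜 => Z' * (X ^ 2 - 4 * Z' ^ 2) + W ^ 2 - a * Z' ^ 2 - b * Z') _ Z :=
    ((((hasDerivAt_id' Z).mul (((hasDerivAt_pow 2 Z).const_mul 4).const_sub (X ^ 2))).add_const
      (W ^ 2)).sub ((hasDerivAt_pow 2 Z).const_mul a)).sub ((hasDerivAt_id' Z).const_mul b)
  rw [h.deriv]
  norm_num
  ring

theorem surface_singular_of_sq_eq {a b x : 𝕜} (hx : x ^ 2 = b) :
    (0 : 𝕜) * (x ^ 2 - 4 * 0 ^ 2) + 0 ^ 2 - a * 0 ^ 2 - b * 0 = 0 ∧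
      deriv (fun X' : 𝕜 => 0 * (X' ^ 2 - 4 * 0 ^ 2) + 0 ^ 2 - a * 0 ^ 2 - b * 0) x = 0 ∧
      deriv (fun W' : 𝕜 => 0 * (x ^ 2 - 4 * 0 ^ 2) + W' ^ 2 - a * 0 ^ 2 - b * 0) 0 = 0 ∧
      deriv (fun Z' : 𝕜 => Z' * (x ^ 2 - 4 * Z' ^ 2) + 0 ^ 2 - a * Z' ^ 2 - b * Z') 0 = 0 := by
  refine ⟨by ring, ?_, ?_, ?_⟩
  · rw [deriv_surface_fst]
    ring
  · rw [deriv_surface_snd]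
    ring
  · rw [deriv_surface_thd, hx]
    ring

end Partials

/-- Type B₂ instance: every fiber of the quotient deformation is singular. -/
theorem stmt_0 (t2 t4 : ℂ) :
    ∃ X W Z : ℂ,
      Z * (X ^ 2 - 4 * Z ^ 2) + W ^ 2 - 4 * t2 * Z ^ 2 - 4 * (t4 + t2 ^ 2 / 8) * Z = 0 ∧
      deriv (fun X' : ℂ =>
        Z * (X' ^ 2 - 4 * Z ^ 2) + W ^ 2 - 4 * t2 * Z ^ 2 - 4 * (t4 + t2 ^ 2 / 8) * Z) X = 0 ∧
      deriv (fun W' : ℂ =>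
        Z * (X ^ 2 - 4 * Z ^ 2) + W' ^ 2 - 4 * t2 * Z ^ 2 - 4 * (t4 + t2 ^ 2 / 8) * Z) W = 0 ∧
      deriv (fun Z' : ℂ =>
        Z' * (X ^ 2 - 4 * Z' ^ 2) + W ^ 2 - 4 * t2 * Z' ^ 2 - 4 * (t4 + t2 ^ 2 / 8) * Z') Z = 0 := by
  obtain ⟨x, hx⟩ := IsAlgClosed.exists_pow_nat_eq (4 * (t4 + t2 ^ 2 / 8)) two_pos
  exact ⟨x, 0, 0, surface_singular_of_sq_eq hx⟩
end

section
/- For every triple of complex numbers (t2, t4, t6), the surface in ℂ³ defined by F(X,W,Z) = Z·(X² + 4Z³) + W² + 4·t2·Z³ + 4·(t4 + t2²/4)·Z² + 4·(t6 + t2·t4/6 + t2³/108)·Z = 0 is singular, i.e. there exists a point (X,W,Z) ∈ ℂ³ with F(X,W,Z) = 0 at which all three partial derivatives of F vanish. (This is the type B₃ instance of the theorem that every fiber of the quotient deformation is singular.) -/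
/-!
The fiber is `F = Z · (X² + h Z) + W²` with `h` a polynomial, `h 0 = 4 (t6 + t2 t4 / 6 + t2³ / 108)`.
Along the line `W = Z = 0`, `F`, `∂F/∂X = 2XZ` and `∂F/∂W = 2W` vanish, while `∂F/∂Z = X² + h 0`;
so a square root `X` of `-h 0` gives a singular point.
-/

theorem deriv_id_mul_zero {𝕜 : Type*} [NontriviallyNormedField 𝕜] {g : 𝕜 → 𝕜}
    (hg : DifferentiableAt 𝕜 g 0) :
    deriv (fun z => z * g z) 0 = g 0 := by
  rw [deriv_fun_mul differentiableAt_fun_id hg]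
  simp

/-- Type B₃ instance: every fiber of the quotient deformation is singular. -/
theorem stmt_1 (t2 t4 t6 : ℂ) :
    ∃ X W Z : ℂ,
      Z * (X ^ 2 + 4 * Z ^ 3) + W ^ 2 + 4 * t2 * Z ^ 3 + 4 * (t4 + t2 ^ 2 / 4) * Z ^ 2
        + 4 * (t6 + t2 * t4 / 6 + t2 ^ 3 / 108) * Z = 0 ∧
      deriv (fun X' : ℂ =>
        Z * (X' ^ 2 + 4 * Z ^ 3) + W ^ 2 + 4 * t2 * Z ^ 3 + 4 * (t4 + t2 ^ 2 / 4) * Z ^ 2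
          + 4 * (t6 + t2 * t4 / 6 + t2 ^ 3 / 108) * Z) X = 0 ∧
      deriv (fun W' : ℂ =>
        Z * (X ^ 2 + 4 * Z ^ 3) + W' ^ 2 + 4 * t2 * Z ^ 3 + 4 * (t4 + t2 ^ 2 / 4) * Z ^ 2
          + 4 * (t6 + t2 * t4 / 6 + t2 ^ 3 / 108) * Z) W = 0 ∧
      deriv (fun Z' : ℂ =>
        Z' * (X ^ 2 + 4 * Z' ^ 3) + W ^ 2 + 4 * t2 * Z' ^ 3 + 4 * (t4 + t2 ^ 2 / 4) * Z' ^ 2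
          + 4 * (t6 + t2 * t4 / 6 + t2 ^ 3 / 108) * Z') Z = 0 := by
  set b := t6 + t2 * t4 / 6 + t2 ^ 3 / 108
  obtain ⟨x, hx⟩ := IsAlgClosed.exists_pow_nat_eq (-(4 * b)) two_pos
  refine ⟨x, 0, 0, by ring, by simp, by simp, ?_⟩
  have hF : (fun Z' : ℂ => Z' * (x ^ 2 + 4 * Z' ^ 3) + 0 ^ 2 + 4 * t2 * Z' ^ 3
      + 4 * (t4 + t2 ^ 2 / 4) * Z' ^ 2 + 4 * b * Z') =
      fun Z' => Z' * (x ^ 2 + 4 * b + (4 * Z' ^ 3 + 4 * t2 * Z' ^ 2 + 4 * (t4 + t2 ^ 2 / 4) * Z')) := by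
    funext Z'
    ring
  rw [hF, deriv_id_mul_zero (by fun_prop), hx]
  ring
end

section
/- For every triple of complex numbers (t2, t4, t6), the surface in ℂ³ defined by F(X,Y,W) = −(1/64)·X⁵ + X·Y² − W² + A4·X⁴ + A3·X³ + A2·X² + A1·X + AY·Y + A0 = 0 is singular, where A4 = t2/32, A3 = −(3/128)·t2² − (1/32)·t4, A2 = (7/192)·t2·t4 + (1/32)·t6 + (7/864)·t2³, A1 = −(1/32)·t6·t2 − (5/384)·t2²·t4 − (35/27648)·t2⁴ − (1/64)·t4², AY = (1/4)·t6 + (1/24)·t2·t4 + (1/432)·t2³, and A0 = (1/128)·t6·t2² + (1/32)·t6·t4 + (11/6912)·t2³·t4 + (1/192)·t2·t4² + (1/13824)·t2⁵. That is, there exists a point (X,Y,W) ∈ ℂ³ with F(X,Y,W) = 0 at which all three partial derivatives of F vanish. (This is the type C₃ instance of the theorem that every fiber of the quotient deformation is singular.) -/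
/-!
Write `b` for the coefficient of `Y` and `c(X) = X³ - t₂X² + (t₂²/4 + t₄)X - 4b`. The
coefficients are arranged so that `4X · F = (2XY + b)² - c(X)²/16 - 4XW²`. Over a root `x`
of `c`, write `c(X) = (X - x) q(X)`, so `q(0) = x² - t₂x + t₂²/4 + t₄`; then `(x, -q(0)/8, 0)`
is a singular point of `F`. When `x ≠ 0` this is the point where `2XY + b`, `c` and `W`
vanish, and when `x = 0` it still works because then `F = XY² - W² - X q(X)²/64`.
-/

open Polynomial in
theorem exists_cubic_root {K : Type*} [Field K] [IsAlgClosed K] (a b d : K) :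
    ∃ x : K, x ^ 3 + a * x ^ 2 + b * x + d = 0 := by
  have hdeg : (X ^ 3 + C a * X ^ 2 + C b * X + C d).degree = 3 := by compute_degree!
  obtain ⟨x, hx⟩ := IsAlgClosed.exists_root _ (hdeg ▸ three_ne_zero)
  exact ⟨x, by simpa using hx⟩

section
variable {𝕜 : Type*} [NontriviallyNormedField 𝕜]

def IsSingularPoint (F : 𝕜 → 𝕜 → 𝕜 → 𝕜) (x y w : 𝕜) : Prop :=
  F x y w = 0 ∧ deriv (fun X => F X y w) x = 0 ∧ deriv (fun Y => F x Y w) y = 0 ∧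
    deriv (fun W => F x y W) w = 0

def quinticSurface (c a4 a3 a2 a1 b a0 X Y W : 𝕜) : 𝕜 :=
  c * X ^ 5 + X * Y ^ 2 - W ^ 2 + a4 * X ^ 4 + a3 * X ^ 3 + a2 * X ^ 2 + a1 * X + b * Y + a0

variable (c a4 a3 a2 a1 b a0 : 𝕜)

theorem hasDerivAt_quinticSurface_x (x y w : 𝕜) :
    HasDerivAt (fun X => quinticSurface c a4 a3 a2 a1 b a0 X y w)
      (5 * c * x ^ 4 + y ^ 2 + 4 * a4 * x ^ 3 + 3 * a3 * x ^ 2 + 2 * a2 * x + a1) x :=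
  (((hasDerivAt_pow 5 x).const_mul c).add ((hasDerivAt_id' x).mul_const (y ^ 2))).sub_const (w ^ 2)
    |>.add ((hasDerivAt_pow 4 x).const_mul a4) |>.add ((hasDerivAt_pow 3 x).const_mul a3)
    |>.add ((hasDerivAt_pow 2 x).const_mul a2) |>.add ((hasDerivAt_id' x).const_mul a1)
    |>.add_const (b * y) |>.add_const a0 |>.congr_deriv (by norm_num; ring)

theorem hasDerivAt_quinticSurface_y (x y w : 𝕜) :
    HasDerivAt (fun Y => quinticSurface c a4 a3 a2 a1 b a0 x Y w) (2 * x * y + b) y :=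
  ((hasDerivAt_pow 2 y).const_mul x).const_add (c * x ^ 5) |>.sub_const (w ^ 2)
    |>.add_const (a4 * x ^ 4) |>.add_const (a3 * x ^ 3) |>.add_const (a2 * x ^ 2)
    |>.add_const (a1 * x) |>.add ((hasDerivAt_id' y).const_mul b) |>.add_const a0
    |>.congr_deriv (by norm_num; ring)

theorem hasDerivAt_quinticSurface_w (x y w : 𝕜) :
    HasDerivAt (fun W => quinticSurface c a4 a3 a2 a1 b a0 x y W) (-(2 * w)) w :=
  (hasDerivAt_pow 2 w).const_sub (c * x ^ 5 + x * y ^ 2)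
    |>.add_const (a4 * x ^ 4) |>.add_const (a3 * x ^ 3) |>.add_const (a2 * x ^ 2)
    |>.add_const (a1 * x) |>.add_const (b * y) |>.add_const a0
    |>.congr_deriv (by norm_num)

theorem isSingularPoint_quinticSurface {x y : 𝕜}
    (h : quinticSurface c a4 a3 a2 a1 b a0 x y 0 = 0)
    (hx : 5 * c * x ^ 4 + y ^ 2 + 4 * a4 * x ^ 3 + 3 * a3 * x ^ 2 + 2 * a2 * x + a1 = 0)
    (hy : 2 * x * y + b = 0) :
    IsSingularPoint (quinticSurface c a4 a3 a2 a1 b a0) x y 0 :=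
  ⟨h, (hasDerivAt_quinticSurface_x ..).deriv.trans hx,
    (hasDerivAt_quinticSurface_y ..).deriv.trans hy,
    (hasDerivAt_quinticSurface_w ..).deriv.trans (by simp)⟩

end

/-- Type C₃ instance: every fiber of the quotient deformation is singular. -/
theorem stmt_2 (t2 t4 t6 : ℂ) :
    ∃ X Y W : ℂ,
      -(1/64) * X ^ 5 + X * Y ^ 2 - W ^ 2
        + (t2 / 32) * X ^ 4
        + (-(3/128) * t2 ^ 2 - (1/32) * t4) * X ^ 3
        + ((7/192) * t2 * t4 + (1/32) * t6 + (7/864) * t2 ^ 3) * X ^ 2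
        + (-(1/32) * t6 * t2 - (5/384) * t2 ^ 2 * t4 - (35/27648) * t2 ^ 4 - (1/64) * t4 ^ 2) * X
        + ((1/4) * t6 + (1/24) * t2 * t4 + (1/432) * t2 ^ 3) * Y
        + ((1/128) * t6 * t2 ^ 2 + (1/32) * t6 * t4 + (11/6912) * t2 ^ 3 * t4
            + (1/192) * t2 * t4 ^ 2 + (1/13824) * t2 ^ 5) = 0 ∧
      deriv (fun X' : ℂ =>
        -(1/64) * X' ^ 5 + X' * Y ^ 2 - W ^ 2
          + (t2 / 32) * X' ^ 4
          + (-(3/128) * t2 ^ 2 - (1/32) * t4) * X' ^ 3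
          + ((7/192) * t2 * t4 + (1/32) * t6 + (7/864) * t2 ^ 3) * X' ^ 2
          + (-(1/32) * t6 * t2 - (5/384) * t2 ^ 2 * t4 - (35/27648) * t2 ^ 4 - (1/64) * t4 ^ 2) * X'
          + ((1/4) * t6 + (1/24) * t2 * t4 + (1/432) * t2 ^ 3) * Y
          + ((1/128) * t6 * t2 ^ 2 + (1/32) * t6 * t4 + (11/6912) * t2 ^ 3 * t4
              + (1/192) * t2 * t4 ^ 2 + (1/13824) * t2 ^ 5)) X = 0 ∧
      deriv (fun Y' : ℂ =>
        -(1/64) * X ^ 5 + X * Y' ^ 2 - W ^ 2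
          + (t2 / 32) * X ^ 4
          + (-(3/128) * t2 ^ 2 - (1/32) * t4) * X ^ 3
          + ((7/192) * t2 * t4 + (1/32) * t6 + (7/864) * t2 ^ 3) * X ^ 2
          + (-(1/32) * t6 * t2 - (5/384) * t2 ^ 2 * t4 - (35/27648) * t2 ^ 4 - (1/64) * t4 ^ 2) * X
          + ((1/4) * t6 + (1/24) * t2 * t4 + (1/432) * t2 ^ 3) * Y'
          + ((1/128) * t6 * t2 ^ 2 + (1/32) * t6 * t4 + (11/6912) * t2 ^ 3 * t4
              + (1/192) * t2 * t4 ^ 2 + (1/13824) * t2 ^ 5)) Y = 0 ∧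
      deriv (fun W' : ℂ =>
        -(1/64) * X ^ 5 + X * Y ^ 2 - W' ^ 2
          + (t2 / 32) * X ^ 4
          + (-(3/128) * t2 ^ 2 - (1/32) * t4) * X ^ 3
          + ((7/192) * t2 * t4 + (1/32) * t6 + (7/864) * t2 ^ 3) * X ^ 2
          + (-(1/32) * t6 * t2 - (5/384) * t2 ^ 2 * t4 - (35/27648) * t2 ^ 4 - (1/64) * t4 ^ 2) * X
          + ((1/4) * t6 + (1/24) * t2 * t4 + (1/432) * t2 ^ 3) * Y
          + ((1/128) * t6 * t2 ^ 2 + (1/32) * t6 * t4 + (11/6912) * t2 ^ 3 * t4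
              + (1/192) * t2 * t4 ^ 2 + (1/13824) * t2 ^ 5)) W = 0 := by
  obtain ⟨x, hx⟩ := exists_cubic_root (-t2) (t2 ^ 2 / 4 + t4) (-t6 - t2 * t4 / 6 - t2 ^ 3 / 108)
  -- With `t6` eliminated through the root `x`, the three conditions are polynomial identities.
  obtain rfl : t6 = x ^ 3 - t2 * x ^ 2 + (t2 ^ 2 / 4 + t4) * x - t2 * t4 / 6 - t2 ^ 3 / 108 := by
    linear_combination -hx
  exact ⟨x, -(x ^ 2 - t2 * x + t2 ^ 2 / 4 + t4) / 8, 0,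
    isSingularPoint_quinticSurface _ _ _ _ _ _ _
      (by unfold quinticSurface; ring) (by ring) (by ring)⟩
end

section
/- For every quadruple of complex numbers (t2, t6, t8, t12), the surface in ℂ³ defined by F(X,Y,Z) = −(1/4)·X³ + X·Y³ + Z² − (t2/4)·X²·Y + (1/48)·(t6 − t2³/8)·X² + (1/48)·(−t8 + t6·t2/4 − t2⁴/192)·X·Y + (1/576)·(t12 − t8·t2²/8 − t6²/8 + t6·t2³/96)·X = 0 is singular, i.e. there exists a point (X,Y,Z) ∈ ℂ³ with F(X,Y,Z) = 0 at which all three partial derivatives of F vanish. (This is the type F₄ instance of the theorem that every fiber of the quotient deformation is singular.) -/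
open Polynomial in
theorem IsAlgClosed.exists_depressed_cubic_root {K : Type*} [Field K] [IsAlgClosed K] (a b : K) :
    ∃ y : K, y ^ 3 + a * y + b = 0 := by
  have hdeg : (X ^ 3 + C a * X + C b : K[X]).degree = 3 := by compute_degree!
  obtain ⟨y, hy⟩ := IsAlgClosed.exists_root (X ^ 3 + C a * X + C b) (by rw [hdeg]; decide)
  exact ⟨y, by simpa using hy⟩

/-- Type F₄ instance: every fiber of the quotient deformation is singular. -/
theorem stmt_3 (t2 t6 t8 t12 : ℂ) :
    ∃ X Y Z : ℂ,
      -(1/4) * X ^ 3 + X * Y ^ 3 + Z ^ 2 - (t2 / 4) * X ^ 2 * Y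
        + (1/48) * (t6 - t2 ^ 3 / 8) * X ^ 2
        + (1/48) * (-t8 + t6 * t2 / 4 - t2 ^ 4 / 192) * X * Y
        + (1/576) * (t12 - t8 * t2 ^ 2 / 8 - t6 ^ 2 / 8 + t6 * t2 ^ 3 / 96) * X = 0 ∧
      deriv (fun X' : ℂ =>
        -(1/4) * X' ^ 3 + X' * Y ^ 3 + Z ^ 2 - (t2 / 4) * X' ^ 2 * Y
          + (1/48) * (t6 - t2 ^ 3 / 8) * X' ^ 2
          + (1/48) * (-t8 + t6 * t2 / 4 - t2 ^ 4 / 192) * X' * Y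
          + (1/576) * (t12 - t8 * t2 ^ 2 / 8 - t6 ^ 2 / 8 + t6 * t2 ^ 3 / 96) * X') X = 0 ∧
      deriv (fun Y' : ℂ =>
        -(1/4) * X ^ 3 + X * Y' ^ 3 + Z ^ 2 - (t2 / 4) * X ^ 2 * Y'
          + (1/48) * (t6 - t2 ^ 3 / 8) * X ^ 2
          + (1/48) * (-t8 + t6 * t2 / 4 - t2 ^ 4 / 192) * X * Y'
          + (1/576) * (t12 - t8 * t2 ^ 2 / 8 - t6 ^ 2 / 8 + t6 * t2 ^ 3 / 96) * X) Y = 0 ∧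
      deriv (fun Z' : ℂ =>
        -(1/4) * X ^ 3 + X * Y ^ 3 + Z' ^ 2 - (t2 / 4) * X ^ 2 * Y
          + (1/48) * (t6 - t2 ^ 3 / 8) * X ^ 2
          + (1/48) * (-t8 + t6 * t2 / 4 - t2 ^ 4 / 192) * X * Y
          + (1/576) * (t12 - t8 * t2 ^ 2 / 8 - t6 ^ 2 / 8 + t6 * t2 ^ 3 / 96) * X) Z = 0 := by
  obtain ⟨y, hy⟩ := IsAlgClosed.exists_depressed_cubic_root
    ((1/48) * (-t8 + t6 * t2 / 4 - t2 ^ 4 / 192))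
    ((1/576) * (t12 - t8 * t2 ^ 2 / 8 - t6 ^ 2 / 8 + t6 * t2 ^ 3 / 96))
  -- F = X·G(X, Y) + Z², so at (0, y, 0) everything vanishes except possibly ∂F/∂X = G(0, y),
  -- which is the cubic just solved.
  refine ⟨0, y, 0, by ring, ?_, by simp, by simp⟩
  simpa (disch := fun_prop) [zero_pow two_ne_zero] using hy
end

section
/- For every pair of complex numbers (t2, t6), the surface in ℂ³ defined by F(X,Y,Z) = X³·Y − 11664·Y³ + Z² + 324·t2·X·Y² + (189·t2³ + 5832·t6)·Y² − ((15/16)·t2⁴ + 81·t2·t6)·X·Y − ((11/32)·t2⁶ + (189/4)·t2³·t6 + 729·t6²)·Y = 0 is singular, i.e. there exists a point (X,Y,Z) ∈ ℂ³ with F(X,Y,Z) = 0 at which all three partial derivatives of F vanish. (This is the instance of type G₂ = (D₄, 𝔖₃) of the theorem that every fiber of the quotient deformation is singular.) -/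
/-!
Every term of `F` except `Z²` contains `Y`, so at any point with `Y = Z = 0` the surface equation
and the partial derivatives in `X` and `Z` vanish. There `∂F/∂Y` is the depressed cubic
`X³ - c X - d` in `X`, which has a root because `ℂ` is algebraically closed.
-/

theorem IsAlgClosed.exists_depressed_cubic_eq_zero {k : Type*} [Field k] [IsAlgClosed k]
    (c d : k) : ∃ x : k, x ^ 3 - c * x - d = 0 := by
  open Polynomial in
  have hdeg : (X ^ 3 - C c * X - C d : k[X]).degree ≠ 0 := by
    have : (X ^ 3 - C c * X - C d : k[X]).degree = 3 := by compute_degree!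
    rw [this]; decide
  obtain ⟨x, hx⟩ := IsAlgClosed.exists_root _ hdeg
  exact ⟨x, by simpa using hx⟩

theorem hasDerivAt_cubic_zero {𝕜 : Type*} [NontriviallyNormedField 𝕜] (a b c e : 𝕜) :
    HasDerivAt (fun y : 𝕜 => a + b * y + c * y ^ 2 + e * y ^ 3) b 0 := by
  have h := (((hasDerivAt_id (0 : 𝕜)).const_mul b).const_add a).add
    ((((hasDerivAt_id (0 : 𝕜)).pow 2).const_mul c).add (((hasDerivAt_id (0 : 𝕜)).pow 3).const_mul e))
  refine (h.congr_deriv (by simp)).congr_of_eventuallyEq (.of_forall fun y => ?_)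
  simp only [Pi.add_apply, Pi.pow_apply, id]; ring

/-- Type G₂ = (D₄, 𝔖₃) instance: every fiber of the quotient deformation is singular. -/
theorem stmt_5 (t2 t6 : ℂ) :
    ∃ X Y Z : ℂ,
      X ^ 3 * Y - 11664 * Y ^ 3 + Z ^ 2 + 324 * t2 * X * Y ^ 2
        + (189 * t2 ^ 3 + 5832 * t6) * Y ^ 2
        - ((15/16) * t2 ^ 4 + 81 * t2 * t6) * X * Y
        - ((11/32) * t2 ^ 6 + (189/4) * t2 ^ 3 * t6 + 729 * t6 ^ 2) * Y = 0 ∧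
      deriv (fun X' : ℂ =>
        X' ^ 3 * Y - 11664 * Y ^ 3 + Z ^ 2 + 324 * t2 * X' * Y ^ 2
          + (189 * t2 ^ 3 + 5832 * t6) * Y ^ 2
          - ((15/16) * t2 ^ 4 + 81 * t2 * t6) * X' * Y
          - ((11/32) * t2 ^ 6 + (189/4) * t2 ^ 3 * t6 + 729 * t6 ^ 2) * Y) X = 0 ∧
      deriv (fun Y' : ℂ =>
        X ^ 3 * Y' - 11664 * Y' ^ 3 + Z ^ 2 + 324 * t2 * X * Y' ^ 2
          + (189 * t2 ^ 3 + 5832 * t6) * Y' ^ 2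
          - ((15/16) * t2 ^ 4 + 81 * t2 * t6) * X * Y'
          - ((11/32) * t2 ^ 6 + (189/4) * t2 ^ 3 * t6 + 729 * t6 ^ 2) * Y') Y = 0 ∧
      deriv (fun Z' : ℂ =>
        X ^ 3 * Y - 11664 * Y ^ 3 + Z' ^ 2 + 324 * t2 * X * Y ^ 2
          + (189 * t2 ^ 3 + 5832 * t6) * Y ^ 2
          - ((15/16) * t2 ^ 4 + 81 * t2 * t6) * X * Y
          - ((11/32) * t2 ^ 6 + (189/4) * t2 ^ 3 * t6 + 729 * t6 ^ 2) * Y) Z = 0 := by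
  set c : ℂ := (15/16) * t2 ^ 4 + 81 * t2 * t6
  set d : ℂ := (11/32) * t2 ^ 6 + (189/4) * t2 ^ 3 * t6 + 729 * t6 ^ 2
  obtain ⟨x, hx⟩ := IsAlgClosed.exists_depressed_cubic_eq_zero c d
  have hY := hasDerivAt_cubic_zero 0 (x ^ 3 - c * x - d)
    (324 * t2 * x + 189 * t2 ^ 3 + 5832 * t6) (-11664)
  refine ⟨x, 0, 0, by ring, by simp, (HasDerivAt.deriv ?_).trans hx, by simp⟩
  exact hY.congr_of_eventuallyEq (.of_forall fun y => by ring)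
end

section
/- Let r ≥ 2 be an integer, α₀, …, α_{r−1} ∈ ℂ, and set F(x,y,z) = x^r + x·y² + z² + Σ_{i=0}^{r−1} α_i·x^i, with zero set S ⊂ ℂ³. Let p : ℂ → ℂ be a polynomial function. If for every (x,y,z) ∈ S the point (x, −y, −z + p(x)) also lies in S, then p(x) = 0 for every x ∈ ℂ. -/
/-!
Fix `x` and let `±z` be the square roots of `-(x ^ r + ∑ αᵢ xⁱ)`, so that `(x, 0, ±z) ∈ S`.
The invariance gives `(p(x) - z)² = z²` and `(p(x) + z)² = z²`; adding them yields
`2 p(x)² = 0`.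
-/

theorem eq_zero_of_sq_neg_add_eq_of_sq_add_eq {K : Type*} [CommRing K] [IsDomain K]
    [NeZero (2 : K)] {a z : K} (hneg : (-z + a) ^ 2 = z ^ 2) (hpos : (z + a) ^ 2 = z ^ 2) : a = 0 := by
  have h : (2 : K) * a ^ 2 = 0 := by linear_combination hneg + hpos
  exact pow_eq_zero_iff two_ne_zero |>.mp ((mul_eq_zero.mp h).resolve_left two_ne_zero)

theorem stmt_7_general (r : ℕ) (α : ℕ → ℂ) (p : Polynomial ℂ)
    (h : ∀ x y z : ℂ,
      x ^ r + x * y ^ 2 + z ^ 2 + ∑ i ∈ Finset.range r, α i * x ^ i = 0 →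
      x ^ r + x * (-y) ^ 2 + (-z + p.eval x) ^ 2
        + ∑ i ∈ Finset.range r, α i * x ^ i = 0) :
    ∀ x : ℂ, p.eval x = 0 := by
  intro x
  obtain ⟨z, hz⟩ := IsAlgClosed.exists_pow_nat_eq
    (-(x ^ r + ∑ i ∈ Finset.range r, α i * x ^ i)) two_pos
  have mem : ∀ w : ℂ, w ^ 2 = z ^ 2 →
      x ^ r + x * 0 ^ 2 + w ^ 2 + ∑ i ∈ Finset.range r, α i * x ^ i = 0 := by
    intro w hw
    linear_combination hw + hz
  have image_pos := h x 0 z (mem z rfl)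
  have image_neg := h x 0 (-z) (mem (-z) (neg_sq z))
  refine eq_zero_of_sq_neg_add_eq_of_sq_add_eq (z := z) ?_ ?_
  · linear_combination image_pos - mem z rfl
  · linear_combination image_neg - mem (-z) (neg_sq z)

/-- Key step for the ℤ/2ℤ-action on fibers of type C_r, r even: the correction
polynomial in the z-coordinate must vanish. -/
theorem stmt_7 (r : ℕ) (hr : 2 ≤ r) (α : ℕ → ℂ) (p : Polynomial ℂ)
    (h : ∀ x y z : ℂ,
      x ^ r + x * y ^ 2 + z ^ 2 + ∑ i ∈ Finset.range r, α i * x ^ i = 0 →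
      x ^ r + x * (-y) ^ 2 + (-z + p.eval x) ^ 2
        + ∑ i ∈ Finset.range r, α i * x ^ i = 0) :
    ∀ x : ℂ, p.eval x = 0 :=
  stmt_7_general r α p h
end

section
/- Let r ≥ 2 be an integer, α₀, …, α_{r−1}, β ∈ ℂ, and set F(x,y,z) = x^r + x·y² + z² + Σ_{i=0}^{r−1} α_i·x^i + β·y, with zero set S ⊂ ℂ³. Let q : ℂ → ℂ be a polynomial function. If for every (x,y,z) ∈ S the point (x, −y + q(x), −z) also lies in S, then β = 0 and q(x) = 0 for every x ∈ ℂ. -/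
/-!
Subtracting the equation of `S` from that of its image under `(x, y, z) ↦ (x, -y + q x, -z)` leaves
`(x q(x) + β)(q(x) - 2y)`. Since `z` is free, every `(x, y)` lifts to `S`, so this vanishes for all
`x, y`; hence `x q(x) + β = 0` identically, i.e. `X q + β = 0` as a polynomial, forcing `β = 0 = q`.
-/

theorem mul_add_mul_sub_two_mul_eq_zero_of_invariant {K : Type*} [Field K] [IsAlgClosed K]
    (f g : K → K) (β : K)
    (h : ∀ x y z : K, f x + x * y ^ 2 + z ^ 2 + β * y = 0 →
      f x + x * (-y + g x) ^ 2 + (-z) ^ 2 + β * (-y + g x) = 0)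
    (x y : K) : (x * g x + β) * (g x - 2 * y) = 0 := by
  obtain ⟨z, hz⟩ := IsAlgClosed.exists_pow_nat_eq (-(f x + x * y ^ 2 + β * y)) two_pos
  have hS : f x + x * y ^ 2 + z ^ 2 + β * y = 0 := by linear_combination hz
  linear_combination h x y z hS - hS

theorem eq_zero_of_forall_mul_sub_two_mul_eq_zero {K : Type*} [Field K] [NeZero (2 : K)]
    {a p : K} (h : ∀ y, a * (p - 2 * y) = 0) : a = 0 := by
  have hp : p - 2 * ((p - 1) / 2) = 1 := by field_simp; ring
  simpa [hp] using h ((p - 1) / 2)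

theorem Polynomial.eq_zero_and_eq_zero_of_forall_mul_eval_add_eq_zero {R : Type*} [CommRing R]
    [IsDomain R] [Infinite R] {q : Polynomial R} {b : R} (h : ∀ x, x * q.eval x + b = 0) :
    b = 0 ∧ q = 0 := by
  have hpoly : X * q + C b = 0 := Polynomial.funext fun x => by simpa using h x
  have hb : b = 0 := by simpa using congrArg (coeff · 0) hpoly
  subst hb
  exact ⟨rfl, by simpa [X_ne_zero] using hpoly⟩

theorem stmt_8_general (r : ℕ) (α : ℕ → ℂ) (β : ℂ) (q : Polynomial ℂ)
    (h : ∀ x y z : ℂ,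
      x ^ r + x * y ^ 2 + z ^ 2 + (∑ i ∈ Finset.range r, α i * x ^ i) + β * y = 0 →
      x ^ r + x * (-y + q.eval x) ^ 2 + (-z) ^ 2
        + (∑ i ∈ Finset.range r, α i * x ^ i) + β * (-y + q.eval x) = 0) :
    β = 0 ∧ ∀ x : ℂ, q.eval x = 0 := by
  have hdefect := mul_add_mul_sub_two_mul_eq_zero_of_invariant
    (fun x => x ^ r + ∑ i ∈ Finset.range r, α i * x ^ i) q.eval β
    fun x y z hS => by linear_combination h x y z (by linear_combination hS)
  have hlin : ∀ x, x * q.eval x + β = 0 := fun x =>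
    eq_zero_of_forall_mul_sub_two_mul_eq_zero (hdefect x)
  obtain ⟨hβ, hq⟩ := Polynomial.eq_zero_and_eq_zero_of_forall_mul_eval_add_eq_zero hlin
  exact ⟨hβ, fun x => by simp [hq]⟩

/-- Key step for the ℤ/2ℤ-action on fibers of type C_r, r odd: the linear term β
and the correction polynomial in the y-coordinate must vanish. -/
theorem stmt_8 (r : ℕ) (hr : 2 ≤ r) (α : ℕ → ℂ) (β : ℂ) (q : Polynomial ℂ)
    (h : ∀ x y z : ℂ,
      x ^ r + x * y ^ 2 + z ^ 2 + (∑ i ∈ Finset.range r, α i * x ^ i) + β * y = 0 →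
      x ^ r + x * (-y + q.eval x) ^ 2 + (-z) ^ 2
        + (∑ i ∈ Finset.range r, α i * x ^ i) + β * (-y + q.eval x) = 0) :
    β = 0 ∧ ∀ x : ℂ, q.eval x = 0 :=
  stmt_8_general r α β q h
end

section
/- For complex numbers (t2, t4), the surface in ℂ³ defined by F(x,y,z) = z⁴ + t2·z² + t4 + t2²/8 − x·y = 0 has a singular point (a point of the surface at which all three partial derivatives of F vanish) if and only if (t2² + 8·t4)·(t2² − 8·t4) = 0. (This computes the discriminant of the semiuniversal deformation of the simple singularity of type B₂.) -/
/-!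
At a singular point the partials `-y` and `-x` vanish, so `x = y = 0` and `z` is a multiple root of
the biquadratic `z ^ 4 + a z ^ 2 + b` with `a = t2`, `b = t4 + t2 ^ 2 / 8`. Since its derivative is
`2 z (2 z ^ 2 + a)`, a multiple root is either `z = 0` (possible iff `b = 0`) or a square root of
`-a / 2` (possible iff `a ^ 2 = 4 b`), and `16 b (a ^ 2 - 4 b) = (t2 ^ 2 + 8 t4) (t2 ^ 2 - 8 t4)`.
-/

theorem deriv_pow_four_add_mul_sq {𝕜 : Type*} [NontriviallyNormedField 𝕜] (a z : 𝕜) :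
    deriv (fun z => z ^ 4 + a * z ^ 2) z = 4 * z ^ 3 + 2 * a * z := by
  have := (hasDerivAt_pow 4 z).add ((hasDerivAt_pow 2 z).const_mul a)
  exact this.deriv.trans (by push_cast; ring)

theorem exists_multiple_root_biquadratic_iff {K : Type*} [Field K] [IsAlgClosed K]
    (h2 : (2 : K) ≠ 0) (a b : K) :
    (∃ z : K, z ^ 4 + a * z ^ 2 + b = 0 ∧ 4 * z ^ 3 + 2 * a * z = 0) ↔ b * (a ^ 2 - 4 * b) = 0 := by
  constructor
  · rintro ⟨z, hroot, hderiv⟩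
    have hfactor : (2 * z) * (2 * z ^ 2 + a) = 0 := by linear_combination hderiv
    rcases mul_eq_zero.1 hfactor with hz | hz
    · obtain rfl : z = 0 := (mul_eq_zero.1 hz).resolve_left h2
      linear_combination (a ^ 2 - 4 * b) * hroot
    · linear_combination b * ((2 * z ^ 2 + a) * hz - 4 * hroot)
  · intro h
    rcases mul_eq_zero.1 h with hb | hab
    · exact ⟨0, by simp [hb], by simp⟩
    · obtain ⟨z, hz⟩ := IsAlgClosed.exists_pow_nat_eq (-a / 2) two_pos
      have hz' : 2 * z ^ 2 + a = 0 := by rw [hz]; field_simp; ring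
      refine ⟨z, ?_, ?_⟩
      · refine mul_left_cancel₀ (mul_ne_zero h2 h2) ?_
        linear_combination (2 * z ^ 2 + a) * hz' - hab
      · linear_combination 2 * z * hz'

/-- Discriminant of the semiuniversal deformation of the simple singularity of type B₂. -/
theorem stmt_10 (t2 t4 : ℂ) :
    (∃ x y z : ℂ,
      z ^ 4 + t2 * z ^ 2 + t4 + t2 ^ 2 / 8 - x * y = 0 ∧
      deriv (fun x' : ℂ => z ^ 4 + t2 * z ^ 2 + t4 + t2 ^ 2 / 8 - x' * y) x = 0 ∧
      deriv (fun y' : ℂ => z ^ 4 + t2 * z ^ 2 + t4 + t2 ^ 2 / 8 - x * y') y = 0 ∧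
      deriv (fun z' : ℂ => z' ^ 4 + t2 * z' ^ 2 + t4 + t2 ^ 2 / 8 - x * y) z = 0) ↔
    (t2 ^ 2 + 8 * t4) * (t2 ^ 2 - 8 * t4) = 0 := by
  have hpartial_x (x y z : ℂ) :
      deriv (fun x' : ℂ => z ^ 4 + t2 * z ^ 2 + t4 + t2 ^ 2 / 8 - x' * y) x = -y := by simp
  have hpartial_y (x y z : ℂ) :
      deriv (fun y' : ℂ => z ^ 4 + t2 * z ^ 2 + t4 + t2 ^ 2 / 8 - x * y') y = -x := by simp
  have hpartial_z (x y z : ℂ) :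
      deriv (fun z' : ℂ => z' ^ 4 + t2 * z' ^ 2 + t4 + t2 ^ 2 / 8 - x * y) z
        = 4 * z ^ 3 + 2 * t2 * z := by simp [deriv_pow_four_add_mul_sq]
  have hdisc : (t2 ^ 2 + 8 * t4) * (t2 ^ 2 - 8 * t4)
      = 16 * ((t4 + t2 ^ 2 / 8) * (t2 ^ 2 - 4 * (t4 + t2 ^ 2 / 8))) := by ring
  rw [hdisc, mul_eq_zero, or_iff_right (by norm_num),
    ← exists_multiple_root_biquadratic_iff two_ne_zero]
  simp only [hpartial_x, hpartial_y, hpartial_z, neg_eq_zero]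
  constructor
  · rintro ⟨x, y, z, hroot, rfl, rfl, hderiv⟩
    exact ⟨z, by linear_combination hroot, hderiv⟩
  · rintro ⟨z, hroot, hderiv⟩
    exact ⟨0, 0, z, by linear_combination hroot, rfl, rfl, hderiv⟩
end

section
/- For complex numbers (t2, t6), the surface in ℂ³ defined by F(x,y,z) = x·y·(x+y) − (t2/2)·x·y + (1/4)·(t6 + t2³/108) − z² = 0 has a singular point (a point of the surface at which all three partial derivatives of F vanish) if and only if (t6 + t2³/108)·(t6 − t2³/108) = 0. (This computes the discriminant of the semiuniversal deformation of the simple singularity of type G₂ = (D₄, ℤ/3ℤ).) -/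
/-!
The only singular points lie in the plane `z = 0`, at critical points of the cubic
`g(x, y) = x y (x + y) - (t₂/2) x y` where `g = -(t₆ + t₂³/108)/4`. The critical points of `g`
are the three points `(0,0)`, `(t₂/2,0)`, `(0,t₂/2)` with critical value `0`, and `(t₂/6,t₂/6)`
with critical value `-t₂³/216`; these two values give the two factors of the discriminant.
-/

section Derivatives

variable {𝕜 : Type*} [NontriviallyNormedField 𝕜]

theorem deriv_cubic_fst (a c w y x : 𝕜) :
    deriv (fun x' => x' * y * (x' + y) - a * x' * y + c - w) x = 2 * x * y + y ^ 2 - a * y := by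
  have h := (((((hasDerivAt_id x).mul_const y).mul ((hasDerivAt_id x).add_const y)).sub
    (((hasDerivAt_id x).const_mul a).mul_const y)).add_const c).sub_const w
  simp only [id_eq] at h
  exact h.deriv.trans (by ring)

theorem deriv_cubic_snd (a c w x y : 𝕜) :
    deriv (fun y' => x * y' * (x + y') - a * x * y' + c - w) y = x ^ 2 + 2 * x * y - a * x := by
  have h := ((((hasDerivAt_id y).const_mul x).mul ((hasDerivAt_id y).const_add x)).sub
    ((hasDerivAt_id y).const_mul (a * x))).add_const c |>.sub_const w
  simp only [id_eq] at h
  exact h.deriv.trans (by ring)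

theorem deriv_const_sub_sq (b z : 𝕜) : deriv (fun z' => b - z' ^ 2) z = -(2 * z) := by
  simp

end Derivatives

theorem G2_cubic_critical_value {K : Type*} [Field K] [CharZero K] {s x y : K}
    (hx : 2 * x * y + y ^ 2 - s / 2 * y = 0) (hy : x ^ 2 + 2 * x * y - s / 2 * x = 0) :
    x * y * (x + y) - s / 2 * x * y = 0 ∨ x * y * (x + y) - s / 2 * x * y = -(s ^ 3 / 216) := by
  have hx' : y * (2 * x + y - s / 2) = 0 := by linear_combination hx
  have hy' : x * (x + 2 * y - s / 2) = 0 := by linear_combination hy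
  rcases mul_eq_zero.mp hx' with rfl | hx'
  · left; ring
  rcases mul_eq_zero.mp hy' with rfl | hy'
  · left; ring
  right
  have hxs : x = s / 6 := by linear_combination 2 / 3 * hx' - 1 / 3 * hy'
  have hys : y = s / 6 := by linear_combination 2 / 3 * hy' - 1 / 3 * hx'
  subst hxs hys
  ring

/-- Discriminant of the semiuniversal deformation of the simple singularity of type
G₂ = (D₄, ℤ/3ℤ). -/
theorem stmt_11 (t2 t6 : ℂ) :
    (∃ x y z : ℂ,
      x * y * (x + y) - (t2 / 2) * x * y + (1/4) * (t6 + t2 ^ 3 / 108) - z ^ 2 = 0 ∧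
      deriv (fun x' : ℂ =>
        x' * y * (x' + y) - (t2 / 2) * x' * y + (1/4) * (t6 + t2 ^ 3 / 108) - z ^ 2) x = 0 ∧
      deriv (fun y' : ℂ =>
        x * y' * (x + y') - (t2 / 2) * x * y' + (1/4) * (t6 + t2 ^ 3 / 108) - z ^ 2) y = 0 ∧
      deriv (fun z' : ℂ =>
        x * y * (x + y) - (t2 / 2) * x * y + (1/4) * (t6 + t2 ^ 3 / 108) - z' ^ 2) z = 0) ↔
    (t6 + t2 ^ 3 / 108) * (t6 - t2 ^ 3 / 108) = 0 := by
  simp only [deriv_cubic_fst, deriv_cubic_snd, deriv_const_sub_sq]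
  constructor
  · rintro ⟨x, y, z, hF, hx, hy, hz⟩
    obtain rfl : z = 0 := by linear_combination -hz / 2
    rcases G2_cubic_critical_value hx hy with hg | hg
    · linear_combination 4 * (t6 - t2 ^ 3 / 108) * (hF - hg)
    · linear_combination 4 * (t6 + t2 ^ 3 / 108) * (hF - hg)
  · intro h
    rcases mul_eq_zero.mp h with h | h
    · exact ⟨0, 0, 0, by linear_combination h / 4, by ring, by ring, by ring⟩
    · exact ⟨t2 / 6, t2 / 6, 0, by linear_combination h / 4, by ring, by ring, by ring⟩
end

section
/- Define polynomial functions of (ξ₁, ξ₂, ξ₃) ∈ ℂ³ by ψ₂ = ξ₁² + ξ₂² + ξ₃², ψ₄ = ξ₁²ξ₂² + ξ₁²ξ₃² + ξ₂²ξ₃² − (5/16)·(ξ₁² + ξ₂² + ξ₃²)², ψ₆ = ξ₁²ξ₂²ξ₃² − (3/8)·(ξ₁² + ξ₂² + ξ₃²)·(ξ₁²ξ₂² + ξ₁²ξ₃² + ξ₂²ξ₃²) + (11/128)·(ξ₁² + ξ₂² + ξ₃²)³, and ψ₈ = −(1/8)·(ξ₁² + ξ₂² + ξ₃²)·ξ₁²ξ₂²ξ₃²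 − (1/16)·(ξ₁²ξ₂² + ξ₁²ξ₃² + ξ₂²ξ₃²)² + (9/128)·(ξ₁²ξ₂² + ξ₁²ξ₃² + ξ₂²ξ₃²)·(ξ₁² + ξ₂² + ξ₃²)² − (51/4096)·(ξ₁² + ξ₂² + ξ₃²)⁴. Then for all (ξ₁, ξ₂, ξ₃) ∈ ℂ³, ψ₈ = −(1/2048)·ψ₂⁴ − (1/8)·ψ₂·ψ₆ − (1/64)·ψ₂²·ψ₄ − (1/16)·ψ₄². -/
/-- Here `σ₁, σ₂, σ₃` stand for the elementary symmetric functions of `ξ₁², ξ₂², ξ₃²`. -/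
theorem flatCoord_relation_elementarySymmetric {K : Type*} [Field K] [CharZero K]
    (σ₁ σ₂ σ₃ : K) :
    -(1/8) * σ₁ * σ₃ - (1/16) * σ₂ ^ 2 + (9/128) * σ₂ * σ₁ ^ 2 - (51/4096) * σ₁ ^ 4
      = -(1/2048) * σ₁ ^ 4 - (1/8) * σ₁ * (σ₃ - (3/8) * σ₁ * σ₂ + (11/128) * σ₁ ^ 3)
        - (1/64) * σ₁ ^ 2 * (σ₂ - (5/16) * σ₁ ^ 2) - (1/16) * (σ₂ - (5/16) * σ₁ ^ 2) ^ 2 := by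
  ring

/-- Relation among the flat coordinates of type D₅ restricted to H_{α₄} ∩ H_{α₅}. -/
theorem stmt_14 (ξ1 ξ2 ξ3 : ℂ)
    (ψ2 ψ4 ψ6 ψ8 : ℂ)
    (hψ2 : ψ2 = ξ1 ^ 2 + ξ2 ^ 2 + ξ3 ^ 2)
    (hψ4 : ψ4 = ξ1 ^ 2 * ξ2 ^ 2 + ξ1 ^ 2 * ξ3 ^ 2 + ξ2 ^ 2 * ξ3 ^ 2
      - (5/16) * (ξ1 ^ 2 + ξ2 ^ 2 + ξ3 ^ 2) ^ 2)
    (hψ6 : ψ6 = ξ1 ^ 2 * ξ2 ^ 2 * ξ3 ^ 2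
      - (3/8) * (ξ1 ^ 2 + ξ2 ^ 2 + ξ3 ^ 2)
          * (ξ1 ^ 2 * ξ2 ^ 2 + ξ1 ^ 2 * ξ3 ^ 2 + ξ2 ^ 2 * ξ3 ^ 2)
      + (11/128) * (ξ1 ^ 2 + ξ2 ^ 2 + ξ3 ^ 2) ^ 3)
    (hψ8 : ψ8 = -(1/8) * (ξ1 ^ 2 + ξ2 ^ 2 + ξ3 ^ 2) * (ξ1 ^ 2 * ξ2 ^ 2 * ξ3 ^ 2)
      - (1/16) * (ξ1 ^ 2 * ξ2 ^ 2 + ξ1 ^ 2 * ξ3 ^ 2 + ξ2 ^ 2 * ξ3 ^ 2) ^ 2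
      + (9/128) * (ξ1 ^ 2 * ξ2 ^ 2 + ξ1 ^ 2 * ξ3 ^ 2 + ξ2 ^ 2 * ξ3 ^ 2)
          * (ξ1 ^ 2 + ξ2 ^ 2 + ξ3 ^ 2) ^ 2
      - (51/4096) * (ξ1 ^ 2 + ξ2 ^ 2 + ξ3 ^ 2) ^ 4) :
    ψ8 = -(1/2048) * ψ2 ^ 4 - (1/8) * ψ2 * ψ6 - (1/64) * ψ2 ^ 2 * ψ4 - (1/16) * ψ4 ^ 2 := by
  subst hψ2 hψ4 hψ6 hψ8
  exact flatCoord_relation_elementarySymmetric _ _ _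
end

section
/- The polynomial map f : ℂ³ → ℂ⁴ defined by f(t2, t4, t6) = (t2, t4 − (1/16)·t2², t6 − (5/24)·t2·t4 + (5/3456)·t2³, (7/110592)·t2⁴ − (1/8)·t2·t6 + (7/384)·t2²·t4 − (1/16)·t4²) is injective, and its image equals {(a, b, c, d) ∈ ℂ⁴ : d = −(1/2048)·a⁴ − (1/8)·a·c − (1/64)·a²·b − (1/16)·b²}. Hence f is a bijection from ℂ³ onto this set. -/
/-!
The first three coordinates of the map form a triangular polynomial automorphism of
three-space (each coordinate is the corresponding variable plus a polynomial in the
previous ones), and the fourth coordinate, rewritten in those new coordinates, is the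
quartic `q a b c = -(1/2048)a⁴ - (1/8)ac - (1/64)a²b - (1/16)b²`. So the map is the
graph of `q` composed with an automorphism, hence injective with image the graph of `q`.
-/

section BaseChange

variable {K : Type*} [Field K]

def baseChange (t : K × K × K) : K × K × K × K :=
  (t.1, t.2.1 - (1/16) * t.1 ^ 2,
    t.2.2 - (5/24) * t.1 * t.2.1 + (5/3456) * t.1 ^ 3,
    (7/110592) * t.1 ^ 4 - (1/8) * t.1 * t.2.2 + (7/384) * t.1 ^ 2 * t.2.1
      - (1/16) * t.2.1 ^ 2)

def baseChangeShear : K × K × K ≃ K × K × K where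
  toFun t := (t.1, t.2.1 - (1/16) * t.1 ^ 2, t.2.2 - (5/24) * t.1 * t.2.1 + (5/3456) * t.1 ^ 3)
  invFun s := (s.1, s.2.1 + (1/16) * s.1 ^ 2,
    s.2.2 + (5/24) * s.1 * (s.2.1 + (1/16) * s.1 ^ 2) - (5/3456) * s.1 ^ 3)
  left_inv t := by ext <;> simp only <;> ring
  right_inv s := by ext <;> simp only <;> ring

def imageQuartic (s : K × K × K) : K :=
  -(1/2048) * s.1 ^ 4 - (1/8) * s.1 * s.2.2 - (1/64) * s.1 ^ 2 * s.2.1 - (1/16) * s.2.1 ^ 2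

def graphImageQuartic (s : K × K × K) : K × K × K × K :=
  (s.1, s.2.1, s.2.2, imageQuartic s)

theorem graphImageQuartic_injective : Function.Injective (graphImageQuartic (K := K)) := by
  rintro ⟨a, b, c⟩ ⟨a', b', c'⟩ h
  simp only [graphImageQuartic, Prod.mk.injEq] at h
  obtain ⟨rfl, rfl, rfl, -⟩ := h
  rfl

theorem range_graphImageQuartic :
    Set.range (graphImageQuartic (K := K)) =
      {p : K × K × K × K | p.2.2.2 = imageQuartic (p.1, p.2.1, p.2.2.1)} := by
  ext ⟨a, b, c, d⟩
  constructor
  · rintro ⟨s, hs⟩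
    rw [← hs]
    rfl
  · intro h
    exact ⟨(a, b, c), by rw [graphImageQuartic, ← h]⟩

theorem baseChange_eq_graphImageQuartic_comp [CharZero K] :
    baseChange (K := K) = graphImageQuartic ∘ baseChangeShear := by
  ext t <;> simp only [baseChange, graphImageQuartic, imageQuartic, baseChangeShear,
    Equiv.coe_fn_mk, Function.comp_apply]
  ring

theorem baseChange_injective [CharZero K] : Function.Injective (baseChange (K := K)) := by
  rw [baseChange_eq_graphImageQuartic_comp]
  exact graphImageQuartic_injective.comp baseChangeShear.injective

theorem range_baseChange [CharZero K] :
    Set.range (baseChange (K := K)) =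
      {p : K × K × K × K | p.2.2.2 = imageQuartic (p.1, p.2.1, p.2.2.1)} := by
  rw [baseChange_eq_graphImageQuartic_comp, Set.range_comp, baseChangeShear.range_eq_univ,
    Set.image_univ, range_graphImageQuartic]

end BaseChange

/-- The base change map of the case A₅−B₃−D₅, in flat coordinates: it is injective
with image cut out by d = −(1/2048)a⁴ − (1/8)ac − (1/64)a²b − (1/16)b², hence a
bijection onto that set. -/
theorem stmt_18 :
    Function.Injective (fun t : ℂ × ℂ × ℂ =>
      ((t.1, t.2.1 - (1/16) * t.1 ^ 2,
        t.2.2 - (5/24) * t.1 * t.2.1 + (5/3456) * t.1 ^ 3,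
        (7/110592) * t.1 ^ 4 - (1/8) * t.1 * t.2.2 + (7/384) * t.1 ^ 2 * t.2.1
          - (1/16) * t.2.1 ^ 2) : ℂ × ℂ × ℂ × ℂ)) ∧
    Set.range (fun t : ℂ × ℂ × ℂ =>
      ((t.1, t.2.1 - (1/16) * t.1 ^ 2,
        t.2.2 - (5/24) * t.1 * t.2.1 + (5/3456) * t.1 ^ 3,
        (7/110592) * t.1 ^ 4 - (1/8) * t.1 * t.2.2 + (7/384) * t.1 ^ 2 * t.2.1
          - (1/16) * t.2.1 ^ 2) : ℂ × ℂ × ℂ × ℂ)) =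
      {p : ℂ × ℂ × ℂ × ℂ | p.2.2.2 =
        -(1/2048) * p.1 ^ 4 - (1/8) * p.1 * p.2.2.1 - (1/64) * p.1 ^ 2 * p.2.1
          - (1/16) * p.2.1 ^ 2} :=
  ⟨baseChange_injective, range_baseChange⟩
end

section
/- The polynomial map f : ℂ² → ℂ⁴ defined by f(t2, t6) = (t2, −6·t6 − (5/72)·t2³, (7/576)·t2⁴ + (3/2)·t2·t6, −(29/20736)·t2⁶ − (9/2)·t6² − (11/48)·t6·t2³) is injective, and its image equals {(a, c, d, e) ∈ ℂ⁴ : d = −(1/192)·a⁴ − (1/4)·a·c and e = (1/1536)·a⁶ − (1/8)·c² + (1/48)·a³·c}. Hence f is a bijection from ℂ² onto this set. -/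
/-! The second coordinate `c = -6 t₆ - (5/72) t₂³` can be solved for `t₆`, so `(a, c) ↦ (a, t₆)`
inverts the map on its first two coordinates; substituting this inverse into the last two
coordinates yields exactly the two defining relations of the image. -/

section BaseChange

variable {K : Type*} [Field K]

def baseChangeE6 (t : K × K) : K × K × K × K :=
  (t.1, -6 * t.2 - (5/72) * t.1 ^ 3,
    (7/576) * t.1 ^ 4 + (3/2) * t.1 * t.2,
    -(29/20736) * t.1 ^ 6 - (9/2) * t.2 ^ 2 - (11/48) * t.2 * t.1 ^ 3)

def baseChangeE6Locus : Set (K × K × K × K) :=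
  {p | p.2.2.1 = -(1/192) * p.1 ^ 4 - (1/4) * p.1 * p.2.1 ∧
    p.2.2.2 = (1/1536) * p.1 ^ 6 - (1/8) * p.2.1 ^ 2 + (1/48) * p.1 ^ 3 * p.2.1}

def baseChangeE6Inv (p : K × K × K × K) : K × K :=
  (p.1, -(p.2.1 + (5/72) * p.1 ^ 3) / 6)

variable [CharZero K]

theorem baseChangeE6Inv_baseChangeE6 (t : K × K) : baseChangeE6Inv (baseChangeE6 t) = t := by
  obtain ⟨a, b⟩ := t
  simp only [baseChangeE6Inv, baseChangeE6, Prod.mk.injEq, true_and]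
  field_simp
  ring

theorem baseChangeE6_injective : Function.Injective (baseChangeE6 (K := K)) :=
  Function.LeftInverse.injective baseChangeE6Inv_baseChangeE6

theorem baseChangeE6_mem_locus (t : K × K) : baseChangeE6 t ∈ baseChangeE6Locus := by
  constructor <;> simp only [baseChangeE6] <;> ring

theorem baseChangeE6_baseChangeE6Inv {p : K × K × K × K} (hp : p ∈ baseChangeE6Locus) :
    baseChangeE6 (baseChangeE6Inv p) = p := by
  obtain ⟨a, c, d, e⟩ := p
  obtain ⟨hd, he⟩ := hp
  simp only at hd he
  simp only [baseChangeE6, baseChangeE6Inv, Prod.mk.injEq, true_and, hd, he]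
  refine ⟨?_, ?_, ?_⟩ <;> field_simp <;> ring

theorem range_baseChangeE6 : Set.range (baseChangeE6 (K := K)) = baseChangeE6Locus :=
  Set.Subset.antisymm (Set.range_subset_iff.2 baseChangeE6_mem_locus)
    fun _ hp => ⟨_, baseChangeE6_baseChangeE6Inv hp⟩

end BaseChange

/-- The base change map of the case D₄−G₂−E₆, in flat coordinates: it is injective
with image cut out by the relations d = −(1/192)a⁴ − (1/4)ac and
e = (1/1536)a⁶ − (1/8)c² + (1/48)a³c, hence a bijection onto that set. -/
theorem stmt_19 :
    Function.Injective (fun t : ℂ × ℂ =>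
      ((t.1, -6 * t.2 - (5/72) * t.1 ^ 3,
        (7/576) * t.1 ^ 4 + (3/2) * t.1 * t.2,
        -(29/20736) * t.1 ^ 6 - (9/2) * t.2 ^ 2 - (11/48) * t.2 * t.1 ^ 3)
          : ℂ × ℂ × ℂ × ℂ)) ∧
    Set.range (fun t : ℂ × ℂ =>
      ((t.1, -6 * t.2 - (5/72) * t.1 ^ 3,
        (7/576) * t.1 ^ 4 + (3/2) * t.1 * t.2,
        -(29/20736) * t.1 ^ 6 - (9/2) * t.2 ^ 2 - (11/48) * t.2 * t.1 ^ 3)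
          : ℂ × ℂ × ℂ × ℂ)) =
      {p : ℂ × ℂ × ℂ × ℂ |
        p.2.2.1 = -(1/192) * p.1 ^ 4 - (1/4) * p.1 * p.2.1 ∧
        p.2.2.2 = (1/1536) * p.1 ^ 6 - (1/8) * p.2.1 ^ 2
          + (1/48) * p.1 ^ 3 * p.2.1} :=
  ⟨baseChangeE6_injective, range_baseChangeE6⟩
end
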